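/- For β > 0, q ≥ 2, and even n ≥ 4, the internal energy per particle of the Potts model on cycles satisfies U_{C_n}^q(β) < U_{C_{n+2}}^q(β). -/

import Mathlib

open scoped Classical
open Finset

/-- Number of monochromatic edges of `G` under the coloring `σ`. -/
noncomputable def monoEdges {V : Type} [Fintype V] (G : SimpleGraph V) {q : ℕ}
    (σ : V → Fin q) : ℕ :=
  (G.edgeFinset.filter fun e =>
    Sym2.lift ⟨fun u v => σ u = σ v, fun _ _ => propext eq_comm⟩ e).card

/-- The `q`-color Potts partition function of `G` at inverse temperature `β`. -/
noncomputable def pottsZ {V : Type} [Fintype V] (G : SimpleGraph V) (q : ℕ) (β : ℝ) : ℝ :=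
  ∑ σ : V → Fin q, Real.exp (-β * monoEdges G σ)

/-- The internal energy per particle: expected number of monochromatic
edges per vertex in the Potts model. -/
noncomputable def pottsU {V : Type} [Fintype V] (G : SimpleGraph V) (q : ℕ) (β : ℝ) : ℝ :=
  (Fintype.card V : ℝ)⁻¹ *
    (∑ σ : V → Fin q, (monoEdges G σ : ℝ) * Real.exp (-β * monoEdges G σ)) / pottsZ G q β

/-- The number of proper `q`-colorings of `G`. -/
noncomputable def properCount {V : Type} [Fintype V] (G : SimpleGraph V) (q : ℕ) : ℕ :=
  (Finset.univ.filter fun σ : V → Fin q => monoEdges G σ = 0).card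

/-!
Write `w = exp (-β)`. The transfer matrix of the cycle is `T = (w - 1) • 1 + J` with `J` the
all-ones `q × q` matrix, so `Z_n(w) = tr Tⁿ = (w + q - 1)ⁿ + (q - 1) (w - 1)ⁿ`. Since `U` is the
logarithmic derivative `w Z_n'(w) / (n Z_n(w))`, this gives `U_{C_n} = w Z_{n-1} / Z_n`. Comparing
`n` with `n + 2` reduces to the sign of
`Z_{n+1} Z_n - Z_{n-1} Z_{n+2} = -(q - 1) q² (w + q - 1)ⁿ⁻¹ (w - 1)ⁿ⁻¹ (2w + q - 2)`,
which is positive because `w < 1` and `n - 1` is odd.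
-/

theorem Fin.sum_univ_fun_succ {α M : Type*} [Fintype α] [AddCommMonoid M] {k : ℕ}
    (f : (Fin (k + 1) → α) → M) :
    ∑ p, f p = ∑ a : α, ∑ p : Fin k → α, f (Fin.cons a p) := by
  rw [← Fintype.sum_prod_type']
  exact (Fintype.sum_equiv (Fin.consEquiv fun _ => α) _ _ fun _ => rfl).symm

namespace Matrix
variable {α R : Type*} [Fintype α] [DecidableEq α]

section CommSemiring
variable [CommSemiring R]

theorem pow_mul_apply_eq_sum_paths (M N : Matrix α α R) (k : ℕ) (u v : α) :
    (M ^ k * N) u v = ∑ p : Fin k → α,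
      (∏ i : Fin k, M (Fin.cons (α := fun _ => α) u p i.castSucc) (p i)) *
        N (Fin.cons (α := fun _ => α) u p (Fin.last k)) v := by
  induction k generalizing u with
  | zero => simp
  | succ k ih =>
    rw [pow_succ', mul_assoc, mul_apply, Fin.sum_univ_fun_succ]
    refine Finset.sum_congr rfl fun j _ => ?_
    rw [ih, Finset.mul_sum]
    refine Finset.sum_congr rfl fun p _ => ?_
    rw [Fin.prod_univ_succ, ← Fin.succ_last]
    simp only [Fin.cons_zero, Fin.castSucc_zero, Fin.cons_succ, ← Fin.succ_castSucc]
    ring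

theorem trace_pow_succ_eq_sum_cycles (M : Matrix α α R) (k : ℕ) :
    trace (M ^ (k + 1)) = ∑ σ : Fin (k + 1) → α, ∏ i, M (σ i) (σ (i + 1)) := by
  rw [Fin.sum_univ_fun_succ, pow_succ]
  refine Finset.sum_congr rfl fun u _ => ?_
  rw [diag_apply, pow_mul_apply_eq_sum_paths]
  refine Finset.sum_congr rfl fun p _ => ?_
  rw [Fin.prod_univ_castSucc, Fin.last_add_one]
  simp [Fin.coeSucc_eq_succ]

end CommSemiring

section CommRing
variable [CommRing R]

theorem exists_pow_smul_one_add_allOnes (b : R) (n : ℕ) :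
    ∃ p : R, (b • 1 + of fun _ _ : α => (1 : R)) ^ n = b ^ n • 1 + p • (of fun _ _ => 1) ∧
      (Fintype.card α : R) * p = (b + Fintype.card α) ^ n - b ^ n := by
  set J : Matrix α α R := of fun _ _ => 1
  have hJJ : J * J = (Fintype.card α : R) • J := by ext; simp [J, mul_apply]
  induction n with
  | zero => exact ⟨0, by simp⟩
  | succ n ih =>
    obtain ⟨p, hpow, hp⟩ := ih
    refine ⟨b ^ n + (b + Fintype.card α) * p, ?_, by linear_combination (b + Fintype.card α) * hp⟩
    rw [pow_succ, hpow]
    simp only [add_mul, mul_add, Matrix.smul_mul, Matrix.mul_smul, Matrix.one_mul, Matrix.mul_one,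
      hJJ, smul_smul]
    module

theorem trace_pow_smul_one_add_allOnes (b : R) (n : ℕ) :
    trace ((b • 1 + of fun _ _ : α => (1 : R)) ^ n) =
      (b + Fintype.card α) ^ n + (Fintype.card α - 1) * b ^ n := by
  obtain ⟨p, hpow, hp⟩ := exists_pow_smul_one_add_allOnes (α := α) b n
  have hJ : trace (of fun _ _ : α => (1 : R)) = Fintype.card α := by simp [trace]
  rw [hpow, trace_add, trace_smul, trace_smul, trace_one, hJ, smul_eq_mul, smul_eq_mul]
  linear_combination hp

end CommRing

end Matrix

section Potts
variable {V : Type} [Fintype V] (G : SimpleGraph V) (q : ℕ)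

noncomputable def pottsPartitionFn (w : ℝ) : ℝ :=
  ∑ σ : V → Fin q, w ^ monoEdges G σ

theorem pottsZ_eq_pottsPartitionFn (β : ℝ) :
    pottsZ G q β = pottsPartitionFn G q (Real.exp (-β)) := by
  simp only [pottsZ, pottsPartitionFn, mul_comm (-β), Real.exp_nat_mul]

theorem hasDerivAt_pottsPartitionFn (w : ℝ) :
    HasDerivAt (pottsPartitionFn G q)
      (∑ σ : V → Fin q, monoEdges G σ * w ^ (monoEdges G σ - 1)) w :=
  HasDerivAt.fun_sum fun σ _ => hasDerivAt_pow (monoEdges G σ) w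

theorem pottsU_eq_deriv (β : ℝ) :
    pottsU G q β = Real.exp (-β) * deriv (pottsPartitionFn G q) (Real.exp (-β)) /
      (Fintype.card V * pottsPartitionFn G q (Real.exp (-β))) := by
  set w := Real.exp (-β)
  have hnum : ∑ σ : V → Fin q, (monoEdges G σ : ℝ) * Real.exp (-β * monoEdges G σ) =
      w * ∑ σ : V → Fin q, monoEdges G σ * w ^ (monoEdges G σ - 1) := by
    rw [Finset.mul_sum]
    refine Finset.sum_congr rfl fun σ _ => ?_
    rw [mul_comm (-β), Real.exp_nat_mul]
    rcases eq_or_ne (monoEdges G σ) 0 with h | h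
    · simp [h]
    · rw [mul_left_comm, ← pow_sub_one_mul h w, mul_comm _ w]
  rw [pottsU, hnum, (hasDerivAt_pottsPartitionFn G q w).deriv, pottsZ_eq_pottsPartitionFn]
  ring

end Potts

section Cycle
open SimpleGraph

theorem Fin.sym2_mk_add_one_injective (n : ℕ) :
    Function.Injective fun i : Fin (n + 3) => s(i, i + 1) := by
  intro i j h
  rcases Sym2.eq_iff.mp h with ⟨hij, -⟩ | ⟨hij, hji⟩
  · exact hij
  · subst hij
    have h2 : j + (1 + 1) = j + 0 := by rw [← add_assoc, hji, add_zero]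
    have h3 := congrArg Fin.val (add_left_cancel h2)
    have h4 : 2 % (n + 3) = 0 := by simpa [Fin.val_add] using h3
    rw [Nat.mod_eq_of_lt (by omega)] at h4
    omega

theorem SimpleGraph.cycleGraph_edgeFinset (n : ℕ) [Fintype (cycleGraph (n + 3)).edgeSet] :
    (cycleGraph (n + 3)).edgeFinset =
      univ.map ⟨fun i => s(i, i + 1), Fin.sym2_mk_add_one_injective n⟩ := by
  ext e
  induction e using Sym2.ind with
  | _ u v =>
    simp only [mem_edgeFinset, mem_edgeSet, cycleGraph_adj, Finset.mem_map, Finset.mem_univ,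
      true_and, Function.Embedding.coeFn_mk, Sym2.eq_iff]
    constructor
    · rintro (h | h)
      · exact ⟨v, Or.inr ⟨rfl, by rw [← h]; abel⟩⟩
      · exact ⟨u, Or.inl ⟨rfl, by rw [← h]; abel⟩⟩
    · rintro ⟨i, ⟨rfl, rfl⟩ | ⟨rfl, rfl⟩⟩
      · right; abel
      · left; abel

theorem monoEdges_cycleGraph {q : ℕ} (n : ℕ) (σ : Fin (n + 3) → Fin q) :
    monoEdges (cycleGraph (n + 3)) σ = #{i | σ i = σ (i + 1)} := by
  rw [monoEdges, cycleGraph_edgeFinset, filter_map, card_map]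
  congr 1
  ext i
  simp

def cyclePartitionFn (q n : ℕ) (w : ℝ) : ℝ :=
  (w + q - 1) ^ n + (q - 1) * (w - 1) ^ n

theorem pottsPartitionFn_cycleGraph (q n : ℕ) :
    pottsPartitionFn (cycleGraph (n + 3)) q = cyclePartitionFn q (n + 3) := by
  ext w
  set T : Matrix (Fin q) (Fin q) ℝ := (w - 1) • 1 + Matrix.of fun _ _ => 1
  have hT : ∀ u v, T u v = if u = v then w else 1 := by
    intro u v
    by_cases h : u = v <;> simp [T, h]
  calc pottsPartitionFn (cycleGraph (n + 3)) q w
      = ∑ σ : Fin (n + 2 + 1) → Fin q, ∏ i, T (σ i) (σ (i + 1)) := by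
        -- the two `univ`s differ in their `DecidableEq (Fin _)` instance (classical vs. `Fin`'s)
        refine Finset.sum_congr (by congr!) fun σ _ => ?_
        rw [monoEdges_cycleGraph]
        simp only [hT, Finset.prod_ite, prod_const, one_pow, mul_one]
    _ = cyclePartitionFn q (n + 3) w := by
        rw [← Matrix.trace_pow_succ_eq_sum_cycles]
        simp only [T]
        rw [Matrix.trace_pow_smul_one_add_allOnes, Fintype.card_fin, cyclePartitionFn]
        ring

theorem hasDerivAt_cyclePartitionFn (q n : ℕ) (w : ℝ) :
    HasDerivAt (cyclePartitionFn q (n + 1)) ((n + 1) * cyclePartitionFn q n w) w := by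
  have ha : HasDerivAt (fun x : ℝ => x + q - 1) 1 w := ((hasDerivAt_id w).add_const _).sub_const _
  have hb : HasDerivAt (fun x : ℝ => x - 1) 1 w := (hasDerivAt_id w).sub_const _
  refine ((ha.fun_pow (n + 1)).fun_add
    ((hb.fun_pow (n + 1)).const_mul ((q : ℝ) - 1))).congr_deriv ?_
  simp only [cyclePartitionFn, add_tsub_cancel_right]
  push_cast
  ring

theorem pottsU_cycleGraph (q : ℕ) {n : ℕ} (hn : 2 ≤ n) (β : ℝ) :
    pottsU (cycleGraph (n + 1)) q β = Real.exp (-β) * cyclePartitionFn q n (Real.exp (-β)) /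
      cyclePartitionFn q (n + 1) (Real.exp (-β)) := by
  obtain ⟨n, rfl⟩ : ∃ m, n = m + 2 := ⟨n - 2, by omega⟩
  rw [pottsU_eq_deriv, pottsPartitionFn_cycleGraph,
    (hasDerivAt_cyclePartitionFn q (n + 2) _).deriv, Fintype.card_fin]
  have : ((n + 3 : ℕ) : ℝ) ≠ 0 := by positivity
  field_simp
  push_cast
  ring

theorem cyclePartitionFn_mul_sub_mul (q n : ℕ) (w : ℝ) :
    cyclePartitionFn q (n + 2) w * cyclePartitionFn q (n + 1) w -
        cyclePartitionFn q n w * cyclePartitionFn q (n + 3) w =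
      -((q - 1) * (w + q - 1) ^ n * (w - 1) ^ n * (2 * w + q - 2) * q ^ 2) := by
  simp only [cyclePartitionFn]
  ring

theorem cyclePartitionFn_pos_of_even {q n : ℕ} (hq : 1 ≤ q) (hn : Even n) {w : ℝ} (hw : 0 < w) :
    0 < cyclePartitionFn q n w := by
  have hq' : (1 : ℝ) ≤ q := by exact_mod_cast hq
  have ha : 0 < (w + q - 1) ^ n := pow_pos (by linarith) n
  have hb : 0 ≤ ((q : ℝ) - 1) * (w - 1) ^ n := mul_nonneg (by linarith) (hn.pow_nonneg _)
  exact add_pos_of_pos_of_nonneg ha hb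

theorem cyclePartitionFn_div_lt_div {q n : ℕ} (hq : 2 ≤ q) (hn : Odd n) {w : ℝ} (hw0 : 0 < w)
    (hw1 : w < 1) :
    cyclePartitionFn q n w / cyclePartitionFn q (n + 1) w <
      cyclePartitionFn q (n + 2) w / cyclePartitionFn q (n + 3) w := by
  have hq' : (2 : ℝ) ≤ q := by exact_mod_cast hq
  rw [div_lt_div_iff₀ (cyclePartitionFn_pos_of_even (by omega) hn.add_one hw0)
    (cyclePartitionFn_pos_of_even (by omega) (hn.add_odd (by decide : Odd 3)) hw0)]
  have hb : 0 < -(w - 1) ^ n := neg_pos.mpr (hn.pow_neg (by linarith))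
  have ha : 0 < (w + (q : ℝ) - 1) ^ n := pow_pos (by linarith) n
  have hpos : 0 < ((q : ℝ) - 1) * (w + q - 1) ^ n * -(w - 1) ^ n * (2 * w + q - 2) * q ^ 2 :=
    mul_pos (mul_pos (mul_pos (mul_pos (by linarith) ha) hb) (by linarith)) (by positivity)
  linarith [cyclePartitionFn_mul_sub_mul q n w]

end Cycle

theorem potts_energy_cycle_even_increasing (n : ℕ) (hn : 4 ≤ n) (heven : Even n)
    (q : ℕ) (hq : 2 ≤ q) (β : ℝ) (hβ : 0 < β) :
    pottsU (SimpleGraph.cycleGraph n) q β < pottsU (SimpleGraph.cycleGraph (n + 2)) q β := by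
  obtain ⟨j, rfl⟩ : ∃ j, n = j + 1 := ⟨n - 1, by omega⟩
  have hodd : Odd j := by simpa [Nat.even_add_one] using heven
  have hw0 : 0 < Real.exp (-β) := Real.exp_pos _
  have hw1 : Real.exp (-β) < 1 := Real.exp_lt_one_iff.mpr (by linarith)
  rw [pottsU_cycleGraph q (by omega) β, show j + 1 + 2 = j + 2 + 1 from rfl,
    pottsU_cycleGraph q (by omega) β, mul_div_assoc, mul_div_assoc]
  exact mul_lt_mul_of_pos_left (cyclePartitionFn_div_lt_div hq hodd hw0 hw1) hw0
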